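/- arXiv:2102.09937 — 2 statements merged into one kernel-verified Lean document; each statement's English description precedes it below -/
import Mathlib

section
/- (Stein extension preserves functions on the domain and key pointwise bound) Let D = {(x', x₃) : x₃ > ω(x')} with ω Lipschitz (constant M), let δ* be a regularized distance to ∂D satisfying δ*(x', x₃) ≥ 2(ω(x') - x₃) and δ*(x', x₃) ≤ C(ω(x') - x₃) on the complement of D̄, and let ψ: [1, ∞) → ℝ be continuous with |ψ(λ)| ≤ A λ^{-2} and ∫₁^∞ ψ(λ) dλ = 1. Define, for x₃ < ω(x'), Eu(x', x₃) = ∫₁^∞ u(x', x₃ + λ δ*(x', x₃)) ψ(λ) dλ. Then for any bounded continuous u on D̄ and any point (x⁰, x₃) with x₃ < ω(x⁰): |Eu(x⁰, x₃)| ≤ C' (ω(x⁰) - x₃) ∫_{2ω(x⁰)-x₃}^∞ |u(x⁰, s)| (s - x₃)^{-2} ds, where C' depends only on A and C. -/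
noncomputable section
open MeasureTheory Set

abbrev E2 := EuclideanSpace ℝ (Fin 2)

lemma my_shift_Ioi (f : ℝ → ℝ) (a c : ℝ) :
    ∫ x in Ioi a, f (x + c) = ∫ x in Ioi (a + c), f x := by
  rw [← integral_indicator measurableSet_Ioi, ← integral_indicator measurableSet_Ioi,
    ← integral_add_right_eq_self ((Ioi (a + c)).indicator f) c]
  congr 1
  funext x
  by_cases hx : a < x
  · rw [indicator_of_mem (mem_Ioi.2 hx), indicator_of_mem (mem_Ioi.2 (by linarith))]
  · rw [indicator_of_notMem (by simpa using hx),
      indicator_of_notMem (by simp only [mem_Ioi, not_lt] at hx ⊢; linarith)]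

/-- **Key pointwise bound for Stein's extension operator.** Let `D` be the special
Lipschitz domain above the graph of `ω` (Lipschitz with constant `M`), let `δ*` be a
regularized distance satisfying `2(ω(x') - x₃) ≤ δ*(x', x₃) ≤ C(ω(x') - x₃)` below the
graph, and let `ψ` be continuous on `[1,∞)` with `|ψ(λ)| ≤ A λ^{-2}` and
`∫₁^∞ ψ = 1`. Then for any bounded continuous `u` and any `(x⁰, x₃)` with `x₃ < ω(x⁰)`,
the extension `Eu(x⁰,x₃) = ∫₁^∞ u(x⁰, x₃ + λδ*(x⁰,x₃)) ψ(λ) dλ` satisfies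
`|Eu(x⁰,x₃)| ≤ C' (ω(x⁰) - x₃) ∫_{2ω(x⁰)-x₃}^∞ |u(x⁰,s)| (s-x₃)^{-2} ds` with `C'`
depending only on `A` and `C`. -/
theorem stein_extension_pointwise_bound (A C : ℝ) (hA : 0 ≤ A) (hC : 0 ≤ C) :
    ∃ C' : ℝ, 0 < C' ∧
      ∀ (M : NNReal) (ω : E2 → ℝ), LipschitzWith M ω →
      ∀ δs : E2 → ℝ → ℝ,
        (∀ x' t, t < ω x' →
          2 * (ω x' - t) ≤ δs x' t ∧ δs x' t ≤ C * (ω x' - t)) →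
      ∀ ψ : ℝ → ℝ, ContinuousOn ψ (Ici 1) →
        (∀ l : ℝ, 1 ≤ l → |ψ l| ≤ A * l ^ (-2 : ℝ)) →
        (∫ l in Ioi (1 : ℝ), ψ l) = 1 →
      ∀ u : E2 → ℝ → ℝ, Continuous (fun q : E2 × ℝ => u q.1 q.2) →
        (∃ B : ℝ, ∀ x' t, |u x' t| ≤ B) →
      ∀ (x0 : E2) (x₃ : ℝ), x₃ < ω x0 →
        |∫ l in Ioi (1 : ℝ), u x0 (x₃ + l * δs x0 x₃) * ψ l| ≤
          C' * (ω x0 - x₃) *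
            ∫ s in Ioi (2 * ω x0 - x₃), |u x0 s| * (s - x₃) ^ (-2 : ℝ) := by
  refine ⟨A * C + 1, by positivity, ?_⟩
  intro M ω hω δs hδ ψ hψc hψ hψint u hu hBex x0 x₃ hx
  obtain ⟨B, hB⟩ := hBex
  have hB0 : 0 ≤ B := le_trans (abs_nonneg _) (hB x0 0)
  obtain ⟨hδ1, hδ2⟩ := hδ x0 x₃ hx
  set w := ω x0 with hwdef
  set δ := δs x0 x₃ with hδdef
  have hwx : 0 < w - x₃ := sub_pos.2 hx
  have hδpos : 0 < δ := lt_of_lt_of_le (by linarith) hδ1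
  set c := 2 * w - x₃ with hc
  have hcx : x₃ < c := by simp only [hc]; linarith
  set h : ℝ → ℝ := fun s => |u x0 s| * (s - x₃) ^ (-2 : ℝ) with hh
  have hcont_u : Continuous fun s : ℝ => u x0 s :=
    hu.comp (continuous_const.prodMk continuous_id)
  have hmeas_h : Measurable h := by
    apply hcont_u.abs.measurable.mul
    measurability
  -- integrability of the power function on Ioi c after shift
  have hint_pow : IntegrableOn (fun s => (s - x₃) ^ (-2 : ℝ)) (Ioi c) := by
    have h0 : IntegrableOn (fun t : ℝ => t ^ (-2 : ℝ)) (Ioi (c - x₃)) :=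
      integrableOn_Ioi_rpow_of_lt (by norm_num) (by linarith)
    have h1 : Integrable ((Ioi (c - x₃)).indicator fun t : ℝ => t ^ (-2 : ℝ)) :=
      (integrable_indicator_iff measurableSet_Ioi).2 h0
    have h2 := h1.comp_sub_right x₃
    refine (integrable_indicator_iff measurableSet_Ioi).1 ?_
    convert h2 using 1
    · exact rfl
    funext s
    by_cases hs : c < s
    · rw [indicator_of_mem (mem_Ioi.2 hs), indicator_of_mem (mem_Ioi.2 (by linarith))]
    · rw [indicator_of_notMem (by simpa using hs),
        indicator_of_notMem (by simp only [mem_Ioi, not_lt] at hs ⊢; linarith)]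
  have hI1 : IntegrableOn h (Ioi c) := by
    refine Integrable.mono' (hint_pow.const_mul B) hmeas_h.aestronglyMeasurable.restrict ?_
    filter_upwards [ae_restrict_mem measurableSet_Ioi] with s hs
    have hsx : (0:ℝ) < s - x₃ := by have := mem_Ioi.1 hs; linarith
    have hp : (0:ℝ) ≤ (s - x₃) ^ (-2 : ℝ) := Real.rpow_nonneg hsx.le _
    rw [Real.norm_eq_abs, hh, abs_of_nonneg (mul_nonneg (abs_nonneg _) hp)]
    exact mul_le_mul_of_nonneg_right (hB _ _) hp
  have h_nonneg : ∀ s ∈ Ioi c, 0 ≤ h s := by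
    intro s hs
    have hsx : (0:ℝ) < s - x₃ := by have := mem_Ioi.1 hs; linarith
    exact mul_nonneg (abs_nonneg _) (Real.rpow_nonneg hsx.le _)
  have hI_nonneg : 0 ≤ ∫ s in Ioi c, h s :=
    setIntegral_nonneg measurableSet_Ioi h_nonneg
  -- integrability of l ↦ h (x₃ + l * δ) on Ioi 1
  have hcomp_meas : Measurable fun l : ℝ => h (x₃ + l * δ) :=
    hmeas_h.comp (by measurability)
  have hIg0 : IntegrableOn (fun l : ℝ => h (x₃ + l * δ)) (Ioi 1) := by
    have hb : IntegrableOn (fun l : ℝ => B * δ ^ (-2 : ℝ) * l ^ (-2 : ℝ)) (Ioi 1) :=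
      (integrableOn_Ioi_rpow_of_lt (by norm_num) one_pos).const_mul _
    refine Integrable.mono' hb hcomp_meas.aestronglyMeasurable.restrict ?_
    filter_upwards [ae_restrict_mem measurableSet_Ioi] with l hl
    have hl1 : (1:ℝ) < l := mem_Ioi.1 hl
    have hl0 : (0:ℝ) < l := by linarith
    have e1 : x₃ + l * δ - x₃ = l * δ := by ring
    have hlδ : (0:ℝ) < l * δ := mul_pos hl0 hδpos
    have hp : (0:ℝ) ≤ (l * δ) ^ (-2 : ℝ) := Real.rpow_nonneg hlδ.le _
    rw [Real.norm_eq_abs, hh]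
    simp only [e1]
    rw [abs_of_nonneg (mul_nonneg (abs_nonneg _) hp), Real.mul_rpow hl0.le hδpos.le]
    calc |u x0 (x₃ + l * δ)| * (l ^ (-2:ℝ) * δ ^ (-2:ℝ))
        ≤ B * (l ^ (-2:ℝ) * δ ^ (-2:ℝ)) := by
          apply mul_le_mul_of_nonneg_right (hB _ _)
          exact mul_nonneg (Real.rpow_nonneg hl0.le _) (Real.rpow_nonneg hδpos.le _)
      _ = B * δ ^ (-2:ℝ) * l ^ (-2:ℝ) := by ring
  have hIg : IntegrableOn (fun l : ℝ => A * δ ^ (2:ℝ) * h (x₃ + l * δ)) (Ioi 1) :=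
    hIg0.const_mul _
  have hδδ : δ ^ (2:ℝ) * δ ^ (-2:ℝ) = 1 := by
    rw [← Real.rpow_add hδpos]; norm_num
  -- step 1 and 2
  have step12 : |∫ l in Ioi (1:ℝ), u x0 (x₃ + l * δ) * ψ l| ≤
      ∫ l in Ioi (1:ℝ), A * δ ^ (2:ℝ) * h (x₃ + l * δ) := by
    calc |∫ l in Ioi (1:ℝ), u x0 (x₃ + l * δ) * ψ l|
        ≤ ∫ l in Ioi (1:ℝ), |u x0 (x₃ + l * δ) * ψ l| := by
          have hn := norm_integral_le_integral_norm (μ := volume.restrict (Ioi (1:ℝ)))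
              (fun l => u x0 (x₃ + l * δ) * ψ l)
          simpa only [Real.norm_eq_abs] using hn
      _ ≤ ∫ l in Ioi (1:ℝ), A * δ ^ (2:ℝ) * h (x₃ + l * δ) := by
          refine integral_mono_of_nonneg ?_ hIg ?_
          · filter_upwards with l using abs_nonneg _
          · filter_upwards [ae_restrict_mem measurableSet_Ioi] with l hl
            have hl1 : (1:ℝ) < l := mem_Ioi.1 hl
            have hl0 : (0:ℝ) < l := by linarith
            have e1 : x₃ + l * δ - x₃ = l * δ := by ring
            have key : A * δ ^ (2:ℝ) * h (x₃ + l * δ)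
                = |u x0 (x₃ + l * δ)| * (A * l ^ (-2:ℝ)) := by
              rw [hh]
              simp only [e1]
              rw [Real.mul_rpow hl0.le hδpos.le]
              linear_combination (A * |u x0 (x₃ + l * δ)| * l ^ (-2:ℝ)) * hδδ
            rw [key, abs_mul]
            exact mul_le_mul_of_nonneg_left (hψ l hl1.le) (abs_nonneg _)
  -- step 3: pull out constant
  have step3 : ∫ l in Ioi (1:ℝ), A * δ ^ (2:ℝ) * h (x₃ + l * δ)
      = A * δ ^ (2:ℝ) * ∫ l in Ioi (1:ℝ), h (x₃ + l * δ) :=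
    integral_const_mul _ _
  -- step 4: change of variables
  have step4 : ∫ l in Ioi (1:ℝ), h (x₃ + l * δ) = δ⁻¹ * ∫ s in Ioi (δ + x₃), h s := by
    have h1 := integral_comp_mul_right_Ioi (fun t => h (x₃ + t)) 1 hδpos
    simp only [one_mul, smul_eq_mul] at h1
    rw [h1]
    congr 1
    have h2 : ∀ t : ℝ, h (x₃ + t) = h (t + x₃) := fun t => by rw [add_comm]
    simp only [h2]
    exact my_shift_Ioi h δ x₃
  -- step 5: enlarge domain
  have step5 : ∫ s in Ioi (δ + x₃), h s ≤ ∫ s in Ioi c, h s := by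
    refine setIntegral_mono_set hI1 ?_ ?_
    · filter_upwards [ae_restrict_mem measurableSet_Ioi] with s hs using h_nonneg s hs
    · exact HasSubset.Subset.eventuallyLE (Ioi_subset_Ioi (by simp only [hc]; linarith))
  -- combine
  have hδ2R : δ ^ (2:ℝ) = δ ^ 2 := by
    rw [show (2:ℝ) = ((2:ℕ):ℝ) by norm_num, Real.rpow_natCast]
  have hfinal : A * δ ^ (2:ℝ) * (δ⁻¹ * ∫ s in Ioi c, h s)
      ≤ (A * C + 1) * (w - x₃) * ∫ s in Ioi c, h s := by
    have hδne : δ ≠ 0 := hδpos.ne'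
    have e2 : A * δ ^ (2:ℝ) * (δ⁻¹ * ∫ s in Ioi c, h s) = (A * δ) * ∫ s in Ioi c, h s := by
      rw [hδ2R]
      field_simp
    rw [e2]
    have hAδ : A * δ ≤ (A * C + 1) * (w - x₃) := by nlinarith
    exact mul_le_mul_of_nonneg_right hAδ hI_nonneg
  calc |∫ l in Ioi (1:ℝ), u x0 (x₃ + l * δ) * ψ l|
      ≤ A * δ ^ (2:ℝ) * (δ⁻¹ * ∫ s in Ioi (δ + x₃), h s) := by
        rw [← step4, ← step3]; exact step12
    _ ≤ A * δ ^ (2:ℝ) * (δ⁻¹ * ∫ s in Ioi c, h s) := by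
        apply mul_le_mul_of_nonneg_left
        · exact mul_le_mul_of_nonneg_left step5 (inv_nonneg.2 hδpos.le)
        · positivity
    _ ≤ (A * C + 1) * (w - x₃) * ∫ s in Ioi c, h s := hfinal
end
end

section
/- (One-dimensional weighted estimate underlying the extension theorem) Let p ∈ [1, ∞), γ ≥ 0, M ≥ 0, and fix b ∈ ℝ, c ≥ 0 with |b| ≤ Mc (b plays the role of ω(x⁰), c of |x₂⁰|). Define r(t) = √(c² + t²). Then there is a constant C = C(p, γ, M), independent of b and c, such that for every nonnegative measurable g on (b, ∞): ∫_{-∞}^{b} r(x₃)^{pγ} ((b - x₃) ∫_{2b - x₃}^∞ g(s)(s - x₃)^{-2} ds)^p dx₃ ≤ C ∫_b^∞ r(x₃)^{pγ} g(x₃)^p dx₃. -/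
noncomputable section
open MeasureTheory Set

open Real in
lemma myaux_Ioi (b t q : ℝ) (ht : 0 < t) (hq : q < -1) :
    ∫⁻ s in Ioi (b + t), ENNReal.ofReal ((s - b) ^ q) =
      ENNReal.ofReal (t ^ (q + 1) / (-(q + 1))) := by
  have hmp : MeasurePreserving (fun u : ℝ => u + b) volume volume :=
    measurePreserving_add_right volume b
  have hf : Measurable fun s : ℝ => ENNReal.ofReal ((s - b) ^ q) :=
    ((measurable_id.sub measurable_const).pow measurable_const).ennreal_ofReal
  have hpre : (fun u : ℝ => u + b) ⁻¹' Ioi (b + t) = Ioi t := by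
    ext u; simp only [mem_preimage, mem_Ioi]; constructor <;> intro h <;> linarith
  have h1 := hmp.setLIntegral_comp_preimage (s := Ioi (b + t)) measurableSet_Ioi hf
  rw [hpre] at h1
  rw [← h1]
  have h2 : ∀ᵐ u ∂(volume.restrict (Ioi t)),
      ENNReal.ofReal ((u + b - b) ^ q) = ENNReal.ofReal (u ^ q) := by
    filter_upwards with u; ring_nf
  rw [lintegral_congr_ae h2]
  rw [← ofReal_integral_eq_lintegral_ofReal (integrableOn_Ioi_rpow_of_lt hq ht)]
  · rw [integral_Ioi_rpow_of_lt hq ht]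
    rw [neg_div, div_neg]
  · filter_upwards [ae_restrict_mem measurableSet_Ioi] with u hu
    exact rpow_nonneg (le_of_lt (ht.trans hu)) q

open Real in
lemma myaux_Ioo (m e : ℝ) (hm : 0 ≤ m) (he : 0 ≤ e) :
    ∫⁻ u in Ioo (0 : ℝ) m, ENNReal.ofReal (u ^ e) =
      ENNReal.ofReal (m ^ (e + 1) / (e + 1)) := by
  have hint : IntegrableOn (fun u : ℝ => u ^ e) (Ioo 0 m) := by
    have h := intervalIntegral.intervalIntegrable_rpow' (a := 0) (b := m)
      (r := e) (by linarith)
    rw [intervalIntegrable_iff_integrableOn_Ioo_of_le hm] at h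
    exact h
  rw [← ofReal_integral_eq_lintegral_ofReal hint]
  · congr 1
    rw [← integral_Ioc_eq_integral_Ioo, ← intervalIntegral.integral_of_le hm,
      integral_rpow (Or.inl (by linarith : (-1:ℝ) < e))]
    rw [Real.zero_rpow (by linarith), sub_zero]
  · filter_upwards [ae_restrict_mem measurableSet_Ioo] with u hu
    exact rpow_nonneg hu.1.le e

open Real in
lemma myaux_refl (b s e : ℝ) (he : 0 ≤ e) (hbs : b ≤ s) :
    ∫⁻ x in Ioo (2 * b - s) b, ENNReal.ofReal ((b - x) ^ e) =
      ENNReal.ofReal ((s - b) ^ (e + 1) / (e + 1)) := by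
  have hmp : MeasurePreserving (fun u : ℝ => b - u) volume volume :=
    Measure.measurePreserving_sub_left volume b
  have hf : Measurable fun u : ℝ => ENNReal.ofReal (u ^ e) :=
    (measurable_id.pow measurable_const).ennreal_ofReal
  have hpre : (fun u : ℝ => b - u) ⁻¹' Ioo 0 (s - b) = Ioo (2 * b - s) b := by
    ext u; simp only [mem_preimage, mem_Ioo]
    constructor <;> rintro ⟨h1, h2⟩ <;> constructor <;> linarith
  have h1 := hmp.setLIntegral_comp_preimage (s := Ioo 0 (s - b)) measurableSet_Ioo hf
  rw [hpre] at h1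
  rw [h1, myaux_Ioo _ _ (by linarith) he]

open Real in
lemma myaux_holder (p : ℝ) (hp : 1 ≤ p) (b t : ℝ) (ht : 0 < t)
    (G : ℝ → ENNReal) (hG : Measurable G) :
    (∫⁻ s in Ioi (b + t), G s * ENNReal.ofReal ((s - b) ^ (-2 : ℝ))) ^ p ≤
      ENNReal.ofReal (t ^ ((1 - p ^ 2) / p)) *
        ∫⁻ s in Ioi (b + t), G s ^ p * ENNReal.ofReal ((s - b) ^ (-((p + 1) / p))) := by
  rcases eq_or_lt_of_le hp with hp1 | hp1
  · subst hp1
    simp only [ENNReal.rpow_one]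
    have he : ((1 : ℝ) - 1 ^ 2) / 1 = 0 := by norm_num
    have he2 : -(((1 : ℝ) + 1) / 1) = (-2 : ℝ) := by norm_num
    rw [he, he2, Real.rpow_zero, ENNReal.ofReal_one, one_mul]
  · have hp0 : (0 : ℝ) < p := by linarith
    have hp' : p ≠ 0 := ne_of_gt hp0
    have hpm : p - 1 ≠ 0 := ne_of_gt (by linarith)
    have hppos : (0 : ℝ) < p + 1 := by linarith
    set a : ℝ := -(p + 1) / p ^ 2 with ha
    set a' : ℝ := -2 - a with ha'
    set q : ℝ := p / (p - 1) with hqdef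
    have hpq : p.HolderConjugate q := Real.HolderConjugate.conjExponent hp1
    set f : ℝ → ENNReal := fun s => G s * ENNReal.ofReal ((s - b) ^ a) with hf
    set h : ℝ → ENNReal := fun s => ENNReal.ofReal ((s - b) ^ a') with hh
    have hfm : Measurable f :=
      hG.mul ((measurable_id.sub measurable_const).pow measurable_const).ennreal_ofReal
    have hhm : Measurable h :=
      ((measurable_id.sub measurable_const).pow measurable_const).ennreal_ofReal
    have hsplit : ∫⁻ s in Ioi (b + t), G s * ENNReal.ofReal ((s - b) ^ (-2 : ℝ)) =
        ∫⁻ s in Ioi (b + t), (f * h) s := by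
      refine setLIntegral_congr_fun measurableSet_Ioi (fun s hs => ?_)
      have hsb : (0 : ℝ) < s - b := by have := mem_Ioi.mp hs; linarith
      simp only [hf, hh, Pi.mul_apply]
      rw [mul_assoc, ← ENNReal.ofReal_mul (rpow_nonneg hsb.le a),
        ← Real.rpow_add hsb]
      congr 2
      simp only [ha']
      ring
    rw [hsplit]
    have hHolder := ENNReal.lintegral_mul_le_Lp_mul_Lq
      (volume.restrict (Ioi (b + t))) hpq hfm.aemeasurable hhm.aemeasurable
    have hE : a' * q = -(2 * p + 1) / p := by
      rw [ha', ha, hqdef]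
      field_simp
      ring
    have hhq : ∫⁻ s in Ioi (b + t), h s ^ q =
        ENNReal.ofReal (t ^ (-((p + 1) / p)) * (p / (p + 1))) := by
      have hc : ∀ᵐ s ∂(volume.restrict (Ioi (b + t))),
          h s ^ q = ENNReal.ofReal ((s - b) ^ (a' * q)) := by
        filter_upwards [ae_restrict_mem measurableSet_Ioi] with s hs
        have hsb : (0 : ℝ) < s - b := by have := mem_Ioi.mp hs; linarith
        rw [hh, ENNReal.ofReal_rpow_of_nonneg (rpow_nonneg hsb.le a') hpq.symm.nonneg,
          ← Real.rpow_mul hsb.le]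
      rw [lintegral_congr_ae hc, hE, myaux_Ioi b t _ ht
        (by rw [div_lt_iff₀ hp0]; nlinarith)]
      have h1 : -(2 * p + 1) / p + 1 = -((p + 1) / p) := by field_simp; ring
      rw [h1, neg_neg, div_eq_mul_inv, inv_div]
    have hfp : ∫⁻ s in Ioi (b + t), f s ^ p =
        ∫⁻ s in Ioi (b + t), G s ^ p * ENNReal.ofReal ((s - b) ^ (-((p + 1) / p))) := by
      refine setLIntegral_congr_fun measurableSet_Ioi (fun s hs => ?_)
      have hsb : (0 : ℝ) < s - b := by have := mem_Ioi.mp hs; linarith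
      rw [hf]
      simp only
      rw [ENNReal.mul_rpow_of_nonneg _ _ hp0.le,
        ENNReal.ofReal_rpow_of_nonneg (rpow_nonneg hsb.le a) hp0.le,
        ← Real.rpow_mul hsb.le]
      congr 3
      rw [ha]; field_simp
    calc (∫⁻ s in Ioi (b + t), (f * h) s) ^ p
        ≤ ((∫⁻ s in Ioi (b + t), f s ^ p) ^ (1 / p) *
            (∫⁻ s in Ioi (b + t), h s ^ q) ^ (1 / q)) ^ p :=
          ENNReal.rpow_le_rpow hHolder hp0.le
      _ = (∫⁻ s in Ioi (b + t), f s ^ p) *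
            ((∫⁻ s in Ioi (b + t), h s ^ q) ^ (1 / q)) ^ p := by
          rw [ENNReal.mul_rpow_of_nonneg _ _ hp0.le, ← ENNReal.rpow_mul,
            one_div_mul_cancel hp', ENNReal.rpow_one]
      _ = (∫⁻ s in Ioi (b + t), f s ^ p) *
            (∫⁻ s in Ioi (b + t), h s ^ q) ^ (p - 1) := by
          rw [← ENNReal.rpow_mul]
          congr 1
          rw [one_div, inv_mul_eq_div, hpq.div_conj_eq_sub_one]
      _ ≤ (∫⁻ s in Ioi (b + t), f s ^ p) * ENNReal.ofReal (t ^ ((1 - p ^ 2) / p)) := by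
          refine mul_le_mul_right ?_ _
          rw [hhq, ENNReal.ofReal_rpow_of_nonneg
            (mul_nonneg (rpow_nonneg ht.le _) (by positivity)) (by linarith),
            Real.mul_rpow (rpow_nonneg ht.le _) (by positivity),
            ← Real.rpow_mul ht.le]
          refine ENNReal.ofReal_le_ofReal ?_
          have hle1 : (p / (p + 1)) ^ (p - 1) ≤ 1 :=
            Real.rpow_le_one (by positivity) (by rw [div_le_one hppos]; linarith)
              (by linarith)
          have hexp : -((p + 1) / p) * (p - 1) = (1 - p ^ 2) / p := by
            field_simp; ring
          calc t ^ (-((p + 1) / p) * (p - 1)) * (p / (p + 1)) ^ (p - 1)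
              ≤ t ^ (-((p + 1) / p) * (p - 1)) * 1 :=
                mul_le_mul_of_nonneg_left hle1 (rpow_nonneg ht.le _)
            _ = t ^ ((1 - p ^ 2) / p) := by rw [mul_one, hexp]
      _ = ENNReal.ofReal (t ^ ((1 - p ^ 2) / p)) *
            ∫⁻ s in Ioi (b + t), G s ^ p * ENNReal.ofReal ((s - b) ^ (-((p + 1) / p))) := by
          rw [mul_comm, hfp]

open Real in
/-- **One-dimensional weighted estimate underlying the extension theorem.** For
`p ∈ [1,∞)`, `γ ≥ 0`, `M ≥ 0` there is a constant `C = C(p,γ,M)`, independent of `b`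
and `c` with `|b| ≤ Mc`, such that with `r(t) = √(c² + t²)`, for every nonnegative
measurable `g` on `(b, ∞)`:
`∫_{-∞}^b r(x₃)^{pγ} ((b - x₃) ∫_{2b-x₃}^∞ g(s)(s-x₃)^{-2} ds)^p dx₃
  ≤ C ∫_b^∞ r(x₃)^{pγ} g(x₃)^p dx₃`. -/
theorem one_dimensional_weighted_estimate (p γ M : ℝ) (hp : 1 ≤ p) (hγ : 0 ≤ γ)
    (hM : 0 ≤ M) :
    ∃ C : ℝ, 0 < C ∧ ∀ b c : ℝ, 0 ≤ c → |b| ≤ M * c →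
      ∀ g : ℝ → ℝ, Measurable g → (∀ t, 0 ≤ g t) →
        (∫⁻ x in Iio b, ENNReal.ofReal
            (Real.sqrt (c ^ 2 + x ^ 2) ^ (p * γ) *
              ((b - x) * ∫ s in Ioi (2 * b - x), g s * (s - x) ^ (-2 : ℝ)) ^ p)) ≤
          ENNReal.ofReal C *
            ∫⁻ x in Ioi b, ENNReal.ofReal
              (Real.sqrt (c ^ 2 + x ^ 2) ^ (p * γ) * g x ^ p) := by
  have hp0 : (0 : ℝ) < p := by linarith
  have hpγ : 0 ≤ p * γ := mul_nonneg hp0.le hγ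
  set K : ℝ := Real.sqrt (8 * M ^ 2 + 2) with hK
  have hKpos : 0 < K := Real.sqrt_pos.mpr (by positivity)
  refine ⟨K ^ (p * γ) * (p / (p + 1)), by positivity, ?_⟩
  intro b c hc hbc g hg hg0
  set W : ℝ → ENNReal := fun x => ENNReal.ofReal (Real.sqrt (c ^ 2 + x ^ 2) ^ (p * γ))
    with hWdef
  set Ψ : ℝ → ENNReal := fun s =>
    ENNReal.ofReal (g s) ^ p * ENNReal.ofReal ((s - b) ^ (-((p + 1) / p))) with hΨdef
  have hWm : Measurable W := by
    apply Measurable.ennreal_ofReal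
    exact ((measurable_const.add (measurable_id.pow measurable_const)).sqrt).pow
      measurable_const
  have hΨm : Measurable Ψ :=
    (hg.ennreal_ofReal.pow measurable_const).mul
      ((measurable_id.sub measurable_const).pow measurable_const).ennreal_ofReal
  -- Step A: pointwise estimate of the integrand
  have stepA : (∫⁻ x in Iio b, ENNReal.ofReal
        (Real.sqrt (c ^ 2 + x ^ 2) ^ (p * γ) *
          ((b - x) * ∫ s in Ioi (2 * b - x), g s * (s - x) ^ (-2 : ℝ)) ^ p)) ≤
      ∫⁻ x in Iio b, (W x * ENNReal.ofReal ((b - x) ^ ((1 : ℝ) / p))) *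
        ∫⁻ s in Ioi (2 * b - x), Ψ s := by
    refine lintegral_mono_ae ?_
    filter_upwards [ae_restrict_mem measurableSet_Iio] with x hx
    have ht : 0 < b - x := sub_pos.2 hx
    have hI : 0 ≤ ∫ s in Ioi (2 * b - x), g s * (s - x) ^ (-2 : ℝ) := by
      refine setIntegral_nonneg measurableSet_Ioi fun s hs => ?_
      have hsx : (0 : ℝ) ≤ s - x := by have := mem_Ioi.mp hs; linarith
      exact mul_nonneg (hg0 s) (rpow_nonneg hsx _)
    rw [ENNReal.ofReal_mul (rpow_nonneg (Real.sqrt_nonneg _) _),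
      ← ENNReal.ofReal_rpow_of_nonneg (mul_nonneg ht.le hI) hp0.le,
      ENNReal.ofReal_mul ht.le]
    have hIle : ENNReal.ofReal (∫ s in Ioi (2 * b - x), g s * (s - x) ^ (-2 : ℝ)) ≤
        ∫⁻ s in Ioi (2 * b - x),
          ENNReal.ofReal (g s) * ENNReal.ofReal ((s - b) ^ (-2 : ℝ)) := by
      have hmono : ∀ᵐ s ∂(volume.restrict (Ioi (2 * b - x))),
          ENNReal.ofReal (g s * (s - x) ^ (-2 : ℝ)) ≤
            ENNReal.ofReal (g s) * ENNReal.ofReal ((s - b) ^ (-2 : ℝ)) := by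
        filter_upwards [ae_restrict_mem measurableSet_Ioi] with s hs
        have hs' := mem_Ioi.mp hs
        have h1 : (0 : ℝ) < s - b := by linarith
        have h2 : s - b ≤ s - x := by linarith
        rw [ENNReal.ofReal_mul (hg0 s)]
        exact mul_le_mul_right (ENNReal.ofReal_le_ofReal
          (Real.rpow_le_rpow_of_nonpos h1 h2 (by norm_num))) _
      by_cases hint : IntegrableOn (fun s => g s * (s - x) ^ (-2 : ℝ)) (Ioi (2 * b - x))
      · rw [ofReal_integral_eq_lintegral_ofReal hint ?_]
        · exact lintegral_mono_ae hmono
        · filter_upwards [ae_restrict_mem measurableSet_Ioi] with s hs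
          have hsx : (0 : ℝ) ≤ s - x := by have := mem_Ioi.mp hs; linarith
          exact mul_nonneg (hg0 s) (rpow_nonneg hsx _)
      · rw [integral_undef hint]
        simp
    have h2bx : 2 * b - x = b + (b - x) := by ring
    have hHold := myaux_holder p hp b (b - x) ht
      (fun s => ENNReal.ofReal (g s)) hg.ennreal_ofReal
    rw [← h2bx] at hHold
    calc W x * (ENNReal.ofReal (b - x) *
            ENNReal.ofReal (∫ s in Ioi (2 * b - x), g s * (s - x) ^ (-2 : ℝ))) ^ p
        ≤ W x * (ENNReal.ofReal (b - x) *
            ∫⁻ s in Ioi (2 * b - x),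
              ENNReal.ofReal (g s) * ENNReal.ofReal ((s - b) ^ (-2 : ℝ))) ^ p :=
          mul_le_mul_right
            (ENNReal.rpow_le_rpow (mul_le_mul_right hIle _) hp0.le) _
      _ = W x * (ENNReal.ofReal (b - x) ^ p *
            (∫⁻ s in Ioi (2 * b - x),
              ENNReal.ofReal (g s) * ENNReal.ofReal ((s - b) ^ (-2 : ℝ))) ^ p) := by
          rw [ENNReal.mul_rpow_of_nonneg _ _ hp0.le]
      _ ≤ W x * (ENNReal.ofReal (b - x) ^ p *
            (ENNReal.ofReal ((b - x) ^ ((1 - p ^ 2) / p)) *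
              ∫⁻ s in Ioi (2 * b - x), Ψ s)) :=
          mul_le_mul_right (mul_le_mul_right hHold _) _
      _ = (W x * ENNReal.ofReal ((b - x) ^ ((1 : ℝ) / p))) *
            ∫⁻ s in Ioi (2 * b - x), Ψ s := by
          have hexp : p + (1 - p ^ 2) / p = 1 / p := by field_simp; ring
          have hcomb : ENNReal.ofReal ((b - x) ^ p) *
              ENNReal.ofReal ((b - x) ^ ((1 - p ^ 2) / p)) =
              ENNReal.ofReal ((b - x) ^ ((1 : ℝ) / p)) := by
            rw [← ENNReal.ofReal_mul (rpow_nonneg ht.le _), ← Real.rpow_add ht, hexp]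
          rw [ENNReal.ofReal_rpow_of_nonneg ht.le hp0.le, ← hcomb]; ring
  -- Step B: Tonelli
  set A : ℝ → ENNReal :=
    (Iio b).indicator (fun x => W x * ENNReal.ofReal ((b - x) ^ ((1 : ℝ) / p)))
    with hAdef
  set Bf : ℝ × ℝ → ENNReal :=
    ({q : ℝ × ℝ | 2 * b - q.1 < q.2}).indicator (fun q => Ψ q.2) with hBdef
  have hAm : Measurable A :=
    (hWm.mul ((measurable_const.sub measurable_id).pow
      measurable_const).ennreal_ofReal).indicator measurableSet_Iio
  have hBm : Measurable Bf :=
    (hΨm.comp measurable_snd).indicator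
      (measurableSet_lt (measurable_const.sub measurable_fst) measurable_snd)
  have hAne : ∀ x, A x ≠ ⊤ := by
    intro x
    rw [hAdef]
    by_cases hx : x ∈ Iio b
    · rw [indicator_of_mem hx]
      exact ENNReal.mul_ne_top ENNReal.ofReal_ne_top ENNReal.ofReal_ne_top
    · rw [indicator_of_notMem hx]
      exact ENNReal.zero_ne_top
  have hB : ∀ x s, Bf (x, s) = (Ioi (2 * b - x)).indicator Ψ s := by
    intro x s
    simp only [hBdef, indicator_apply, mem_setOf_eq, mem_Ioi]
  have stepB : (∫⁻ x in Iio b, (W x * ENNReal.ofReal ((b - x) ^ ((1 : ℝ) / p))) *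
        ∫⁻ s in Ioi (2 * b - x), Ψ s) = ∫⁻ s, ∫⁻ x, A x * Bf (x, s) := by
    rw [← lintegral_indicator measurableSet_Iio, ← lintegral_lintegral_swap]
    · refine lintegral_congr fun x => ?_
      by_cases hx : x ∈ Iio b
      · rw [indicator_of_mem hx]
        have : ∀ s, A x * Bf (x, s) =
            (W x * ENNReal.ofReal ((b - x) ^ ((1 : ℝ) / p))) *
              (Ioi (2 * b - x)).indicator Ψ s := by
          intro s; rw [hB, hAdef, indicator_of_mem hx]
        rw [lintegral_congr this,
          lintegral_const_mul' _ _
            (ENNReal.mul_ne_top ENNReal.ofReal_ne_top ENNReal.ofReal_ne_top),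
          lintegral_indicator measurableSet_Ioi]
      · rw [indicator_of_notMem hx]
        have : ∀ s, A x * Bf (x, s) = 0 := by
          intro s; rw [hAdef, indicator_of_notMem hx, zero_mul]
        rw [lintegral_congr this, lintegral_zero]
    · exact ((hAm.comp measurable_fst).mul hBm).aemeasurable
  -- Step C: bound the inner integral for fixed s
  set T : ℝ → ENNReal := (Ioi b).indicator
    (fun s => ENNReal.ofReal (Real.sqrt (c ^ 2 + s ^ 2) ^ (p * γ) * g s ^ p)) with hTdef
  have stepC : ∀ s, (∫⁻ x, A x * Bf (x, s)) ≤
      ENNReal.ofReal (K ^ (p * γ) * (p / (p + 1))) * T s := by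
    intro s
    have hABx : ∀ x, A x * Bf (x, s) =
        (Ioo (2 * b - s) b).indicator
          (fun x => W x * ENNReal.ofReal ((b - x) ^ ((1 : ℝ) / p))) x * Ψ s := by
      intro x
      have hiff : (2 * b - x < s) ↔ (2 * b - s < x) := by
        constructor <;> intro <;> linarith
      rw [hAdef, hBdef]
      rw [Set.indicator_apply, Set.indicator_apply, Set.indicator_apply]
      simp only [mem_Iio, mem_setOf_eq, mem_Ioo, hiff]
      by_cases h1 : x < b <;> by_cases h2 : 2 * b - s < x <;>
        simp [h1, h2]
    have hΨne : Ψ s ≠ ⊤ :=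
      ENNReal.mul_ne_top
        (ENNReal.rpow_ne_top_of_nonneg hp0.le ENNReal.ofReal_ne_top)
        ENNReal.ofReal_ne_top
    rw [lintegral_congr hABx, lintegral_mul_const' _ _ hΨne,
      lintegral_indicator measurableSet_Ioo]
    by_cases hs : b < s
    · have hsb : (0 : ℝ) < s - b := sub_pos.2 hs
      have hTs : T s = ENNReal.ofReal (Real.sqrt (c ^ 2 + s ^ 2) ^ (p * γ) * g s ^ p) :=
        indicator_of_mem hs _
      have hW : ∀ x ∈ Ioo (2 * b - s) b,
          W x ≤ ENNReal.ofReal (K ^ (p * γ) * Real.sqrt (c ^ 2 + s ^ 2) ^ (p * γ)) := by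
        intro x hx
        refine ENNReal.ofReal_le_ofReal ?_
        rw [← Real.mul_rpow hKpos.le (Real.sqrt_nonneg _)]
        refine Real.rpow_le_rpow (Real.sqrt_nonneg _) ?_ hpγ
        have hb2 : b ^ 2 ≤ (M * c) ^ 2 := by
          obtain ⟨hb1, hb2⟩ := abs_le.mp hbc
          nlinarith
        have h8 : c ^ 2 + x ^ 2 ≤ (8 * M ^ 2 + 2) * (c ^ 2 + s ^ 2) := by
          obtain ⟨hx1, hx2⟩ := hx
          rcases le_or_gt x 0 with h0 | h0
          · have hxx : x ^ 2 ≤ (s - 2 * b) ^ 2 := by nlinarith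
            nlinarith [sq_nonneg (s + 2 * b), mul_nonneg (sq_nonneg M) (sq_nonneg c),
              mul_nonneg (sq_nonneg M) (sq_nonneg s), sq_nonneg c, sq_nonneg s]
          · have hxx : x ^ 2 ≤ b ^ 2 := by nlinarith
            nlinarith [mul_nonneg (sq_nonneg M) (sq_nonneg c),
              mul_nonneg (sq_nonneg M) (sq_nonneg s), sq_nonneg c, sq_nonneg s]
        calc Real.sqrt (c ^ 2 + x ^ 2) ≤ Real.sqrt ((8 * M ^ 2 + 2) * (c ^ 2 + s ^ 2)) :=
              Real.sqrt_le_sqrt h8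
          _ = K * Real.sqrt (c ^ 2 + s ^ 2) := Real.sqrt_mul (by positivity) _
      have hWint : (∫⁻ x in Ioo (2 * b - s) b,
            W x * ENNReal.ofReal ((b - x) ^ ((1 : ℝ) / p))) ≤
          ENNReal.ofReal (K ^ (p * γ) * Real.sqrt (c ^ 2 + s ^ 2) ^ (p * γ)) *
            ∫⁻ x in Ioo (2 * b - s) b, ENNReal.ofReal ((b - x) ^ ((1 : ℝ) / p)) := by
        rw [← lintegral_const_mul' _ _ ENNReal.ofReal_ne_top]
        refine lintegral_mono_ae ?_
        filter_upwards [ae_restrict_mem measurableSet_Ioo] with x hx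
        exact mul_le_mul_left (hW x hx) _
      have hrefl := myaux_refl b s ((1 : ℝ) / p) (by positivity) hs.le
      calc (∫⁻ x in Ioo (2 * b - s) b,
              W x * ENNReal.ofReal ((b - x) ^ ((1 : ℝ) / p))) * Ψ s
          ≤ (ENNReal.ofReal (K ^ (p * γ) * Real.sqrt (c ^ 2 + s ^ 2) ^ (p * γ)) *
              ENNReal.ofReal ((s - b) ^ ((1 : ℝ) / p + 1) / ((1 : ℝ) / p + 1))) * Ψ s := by
            rw [← hrefl]
            exact mul_le_mul_left hWint _
        _ = ENNReal.ofReal (K ^ (p * γ) * (p / (p + 1))) * T s := by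
            rw [hTs, hΨdef]
            simp only
            have h1 : (0 : ℝ) ≤ K ^ (p * γ) * Real.sqrt (c ^ 2 + s ^ 2) ^ (p * γ) :=
              mul_nonneg (rpow_nonneg hKpos.le _) (rpow_nonneg (Real.sqrt_nonneg _) _)
            have h2 : (0 : ℝ) ≤ g s ^ p := rpow_nonneg (hg0 s) _
            have h3 : (0 : ℝ) ≤ K ^ (p * γ) * Real.sqrt (c ^ 2 + s ^ 2) ^ (p * γ) *
                ((s - b) ^ ((1 : ℝ) / p + 1) / ((1 : ℝ) / p + 1)) :=
              mul_nonneg h1 (div_nonneg (rpow_nonneg hsb.le _) (by positivity))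
            have h4 : (0 : ℝ) ≤ K ^ (p * γ) * (p / (p + 1)) :=
              mul_nonneg (rpow_nonneg hKpos.le _) (by positivity)
            rw [ENNReal.ofReal_rpow_of_nonneg (hg0 s) hp0.le,
              ← ENNReal.ofReal_mul h1, ← ENNReal.ofReal_mul h2,
              ← ENNReal.ofReal_mul h3, ← ENNReal.ofReal_mul h4]
            congr 1
            have h1p : (1 : ℝ) / p + 1 = (p + 1) / p := by field_simp; ring
            have hcancel : (s - b) ^ ((p + 1) / p) * (s - b) ^ (-((p + 1) / p)) = 1 := by
              rw [← Real.rpow_add hsb, add_neg_cancel, Real.rpow_zero]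
            rw [h1p, div_eq_mul_inv, inv_div]
            linear_combination
              (K ^ (p * γ) * Real.sqrt (c ^ 2 + s ^ 2) ^ (p * γ) * (p / (p + 1)) *
                g s ^ p) * hcancel
    · have hempty : Ioo (2 * b - s) b = ∅ := Ioo_eq_empty (by intro h; exact hs (by linarith))
      rw [hempty]
      simp
  -- Assemble
  calc (∫⁻ x in Iio b, ENNReal.ofReal
        (Real.sqrt (c ^ 2 + x ^ 2) ^ (p * γ) *
          ((b - x) * ∫ s in Ioi (2 * b - x), g s * (s - x) ^ (-2 : ℝ)) ^ p))
      ≤ ∫⁻ x in Iio b, (W x * ENNReal.ofReal ((b - x) ^ ((1 : ℝ) / p))) *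
          ∫⁻ s in Ioi (2 * b - x), Ψ s := stepA
    _ = ∫⁻ s, ∫⁻ x, A x * Bf (x, s) := stepB
    _ ≤ ∫⁻ s, ENNReal.ofReal (K ^ (p * γ) * (p / (p + 1))) * T s :=
        lintegral_mono stepC
    _ = ENNReal.ofReal (K ^ (p * γ) * (p / (p + 1))) * ∫⁻ s, T s :=
        lintegral_const_mul' _ _ ENNReal.ofReal_ne_top
    _ = ENNReal.ofReal (K ^ (p * γ) * (p / (p + 1))) *
        ∫⁻ x in Ioi b, ENNReal.ofReal (Real.sqrt (c ^ 2 + x ^ 2) ^ (p * γ) * g x ^ p) := by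
        rw [hTdef, lintegral_indicator measurableSet_Ioi]
end
end
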